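/- For every ε > 0 there exists M > 1 (depending only on ε and V) such that the following holds. Let V = E₀ ⊕ ⋯ ⊕ E_s be any direct-sum decomposition of V into nonzero subspaces with s ≥ 1, dim E₀ = 1 and κ(E₀,…,E_s) ≥ ε, let 1 ≤ i ≤ s, and let x̄, ȳ ∈ P(V) ∖ P(V⁰) and 0 < r < M^{-1} satisfy: ‖g(x̄)‖_∞ ≤ ε^{-1}, gᵏ(x̄) = gᵏ(ȳ) for all 0 ≤ k ≤ i−1, and d(P_{(Vⁱ)^⊥} x̄, P_{(Vⁱ)^⊥} ȳ) ≤ r (for i = s interpret P_{(Vⁱ)^⊥} as the identity). Then |gⁱ(x̄) − gⁱ(ȳ)| ≤ M r. -/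

import Mathlib

/-!
Normalise `x` and `y` to `x' = x / f₀ x` and `y' = y / f₀ y`, whose components `L k x'` are the
`gᵏ(x̄)`. Since `κ ≥ ε`, `f₀` vanishes on `Vⁱ` and `|f₀ z| ≤ ε⁻¹ ‖z‖`; hence the projections
`a`, `b` of `x'`, `y'` to `(Vⁱ)ᗮ` lie on the affine hyperplane `f₀ = 1`, where lines that are
`r`-close come from points that are `O(r)`-close, with a constant controlled by
`‖a‖ ≤ ‖x'‖ ≤ dim V · ε⁻¹`. As `gᵏ(x̄) = gᵏ(ȳ)` for `k < i`, `a - b` is the projection of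
`v = gⁱ(x̄) - gⁱ(ȳ) ∈ E_i`, which differs from `v` by a vector of `Vⁱ`; so `κ ≥ ε` once more
gives `ε ‖v‖ ≤ ‖a - b‖`.
-/

open scoped RealInnerProductSpace
open Filter

variable {V : Type*} [NormedAddCommGroup V] [InnerProductSpace ℝ V]

/-- The projective distance between the lines spanned by two nonzero vectors:
`d(x̄, ȳ) = (1 − ⟨x,y⟫²/(|x|²|y|²))^{1/2}`. -/
noncomputable def projDist (x y : V) : ℝ :=
  Real.sqrt (1 - ⟪x, y⟫ ^ 2 / (‖x‖ ^ 2 * ‖y‖ ^ 2))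

/-- The distance `d(x̄, P(W))` from the line spanned by `x` to the projective space of the
submodule `W`. -/
noncomputable def projDistToSub (x : V) (W : Submodule ℝ V) : ℝ :=
  sInf {r : ℝ | ∃ y : V, y ∈ W ∧ y ≠ 0 ∧ r = projDist x y}

/-- `κ(E₀,…,E_s)`: the minimal projective distance between nonzero vectors lying in sums of
disjoint subfamilies of the `E i`. -/
noncomputable def kappa {ι : Type*} (E : ι → Submodule ℝ V) : ℝ :=
  sInf {r : ℝ | ∃ (I J : Finset ι) (x y : V), I.Nonempty ∧ J.Nonempty ∧ Disjoint I J ∧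
    x ∈ (⨆ i ∈ I, E i) ∧ x ≠ 0 ∧ y ∈ (⨆ j ∈ J, E j) ∧ y ≠ 0 ∧ r = projDist x y}

/-- `Vⁱ = E_{i+1} ⊕ ⋯ ⊕ E_s`. -/
noncomputable def Vlow {s : ℕ} (E : Fin (s+1) → Submodule ℝ V) (i : ℕ) : Submodule ℝ V :=
  ⨆ j : Fin (s+1), ⨆ _ : i < (j : ℕ), E j

/-- `Wⁱ = E₀ ⊕ ⋯ ⊕ E_i`. -/
noncomputable def Whigh {s : ℕ} (E : Fin (s+1) → Submodule ℝ V) (i : ℕ) : Submodule ℝ V :=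
  ⨆ j : Fin (s+1), ⨆ _ : (j : ℕ) ≤ i, E j

/-- `‖x ∧ y‖ = (|x|²|y|² − ⟨x,y⟫²)^{1/2}`, the area of the parallelogram spanned by `x, y`. -/
noncomputable def wedgeNorm (x y : V) : ℝ :=
  Real.sqrt (‖x‖ ^ 2 * ‖y‖ ^ 2 - ⟪x, y⟫ ^ 2)

lemma projDist_nonneg (x y : V) : 0 ≤ projDist x y := Real.sqrt_nonneg _

lemma projDist_le_one (x y : V) : projDist x y ≤ 1 :=
  Real.sqrt_le_one.mpr (sub_le_self _ (by positivity))

lemma projDist_smul {c d : ℝ} (hc : c ≠ 0) (hd : d ≠ 0) (x y : V) :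
    projDist (c • x) (d • y) = projDist x y := by
  rcases eq_or_ne x 0 with rfl | hx
  · simp [projDist]
  rcases eq_or_ne y 0 with rfl | hy
  · simp [projDist]
  unfold projDist
  simp only [real_inner_smul_left, real_inner_smul_right, norm_smul, Real.norm_eq_abs, mul_pow,
    sq_abs]
  field_simp [norm_ne_zero_iff.2 hx, norm_ne_zero_iff.2 hy]

/-- `(⟪b, a⟫ / ‖b‖²) • b` is the orthogonal projection of `a` on the line `ℝ b`. -/
lemma norm_sub_smul_eq_norm_mul_projDist (a : V) {b : V} (hb : b ≠ 0) :
    ‖a - (⟪b, a⟫ / ‖b‖ ^ 2) • b‖ = ‖a‖ * projDist a b := by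
  rcases eq_or_ne a 0 with rfl | ha
  · simp
  have hsq : ‖a - (⟪b, a⟫ / ‖b‖ ^ 2) • b‖ ^ 2
      = ‖a‖ ^ 2 * (1 - ⟪a, b⟫ ^ 2 / (‖a‖ ^ 2 * ‖b‖ ^ 2)) := by
    rw [norm_sub_sq_real, real_inner_smul_right, norm_smul, Real.norm_eq_abs, mul_pow, sq_abs,
      real_inner_comm a b]
    field_simp [norm_ne_zero_iff.2 ha, norm_ne_zero_iff.2 hb]
    ring
  rw [← Real.sqrt_sq (norm_nonneg (a - _)), hsq, Real.sqrt_mul (sq_nonneg _),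
    Real.sqrt_sq (norm_nonneg a), projDist]

lemma norm_mul_projDist_le_norm_add (u w : V) : ‖u‖ * projDist u w ≤ ‖u + w‖ := by
  rcases eq_or_ne w 0 with rfl | hw
  · simpa using mul_le_of_le_one_right (norm_nonneg u) (projDist_le_one u 0)
  set t := ⟪w, u⟫ / ‖w‖ ^ 2 with ht
  have horth : ⟪u - t • w, (1 + t) • w⟫ = 0 := by
    rw [real_inner_smul_right, inner_sub_left, real_inner_smul_left, real_inner_self_eq_norm_sq,
      real_inner_comm, ht]
    field_simp [norm_ne_zero_iff.2 hw]
    ring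
  have hpyth := norm_add_sq_eq_norm_sq_add_norm_sq_real horth
  rw [show u - t • w + (1 + t) • w = u + w by module] at hpyth
  rw [← norm_sub_smul_eq_norm_mul_projDist u hw]
  nlinarith [norm_nonneg (u - t • w), norm_nonneg (u + w), norm_nonneg ((1 + t) • w)]

lemma norm_sub_le_of_projDist_le (φ : V →ₗ[ℝ] ℝ) {C A r : ℝ} {a b : V}
    (hφ : ∀ z, |φ z| ≤ C * ‖z‖) (ha : φ a = 1) (hb : φ b = 1) (hA : ‖a‖ ≤ A)
    (hr : 2 * C * A * r ≤ 1) (hd : projDist a b ≤ r) :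
    ‖a - b‖ ≤ 2 * (1 + C * A) * A * r := by
  have hb0 : b ≠ 0 := by rintro rfl; simp at hb
  have hC : 0 ≤ C := by
    have := hφ a
    rw [ha, abs_one] at this
    nlinarith [norm_nonneg a]
  set t := ⟪b, a⟫ / ‖b‖ ^ 2
  set p := a - t • b
  have hp : ‖p‖ ≤ A * r := by
    rw [norm_sub_smul_eq_norm_mul_projDist a hb0]
    exact mul_le_mul hA hd (projDist_nonneg a b) ((norm_nonneg a).trans hA)
  have ht : |1 - t| ≤ C * ‖p‖ := by
    simpa [p, ha, hb] using hφ p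
  have hab : ‖a - b‖ ≤ ‖p‖ + C * ‖p‖ * ‖b‖ := by
    rw [show a - b = p + (t - 1) • b by module]
    refine (norm_add_le _ _).trans ?_
    rw [norm_smul, Real.norm_eq_abs, abs_sub_comm]
    gcongr
  have hCp : C * ‖p‖ ≤ 1 / 2 := by nlinarith [mul_le_mul_of_nonneg_left hp hC]
  have hb' : ‖b‖ ≤ A + ‖a - b‖ := (norm_le_norm_add_norm_sub a b).trans (by linarith)
  have : ‖a - b‖ ≤ 2 * (1 + C * A) * ‖p‖ := by
    nlinarith [mul_le_mul_of_nonneg_left hb' (mul_nonneg hC (norm_nonneg p)),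
      mul_le_mul_of_nonneg_right hCp (norm_nonneg (a - b))]
  calc ‖a - b‖ ≤ 2 * (1 + C * A) * ‖p‖ := this
    _ ≤ 2 * (1 + C * A) * (A * r) := by
      gcongr
      nlinarith [(norm_nonneg a).trans hA]
    _ = 2 * (1 + C * A) * A * r := by ring

section Kappa

variable {ι : Type*} {E : ι → Submodule ℝ V}

lemma mem_biSup_of_mem {I : Finset ι} {k : ι} (hk : k ∈ I) {z : V} (hz : z ∈ E k) :
    z ∈ ⨆ i ∈ I, E i :=
  Submodule.mem_iSup_of_mem k (Submodule.mem_iSup_of_mem hk hz)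

lemma kappa_le_projDist {I J : Finset ι} {x y : V} (hIJ : Disjoint I J)
    (hx : x ∈ ⨆ i ∈ I, E i) (hx0 : x ≠ 0) (hy : y ∈ ⨆ j ∈ J, E j) (hy0 : y ≠ 0) :
    kappa E ≤ projDist x y := by
  have hI : I.Nonempty := Finset.nonempty_iff_ne_empty.2 (by rintro rfl; simp_all)
  have hJ : J.Nonempty := Finset.nonempty_iff_ne_empty.2 (by rintro rfl; simp_all)
  refine csInf_le ⟨0, ?_⟩ ⟨I, J, x, y, hI, hJ, hIJ, hx, hx0, hy, hy0, rfl⟩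
  rintro _ ⟨_, _, x, y, -, -, -, -, -, -, -, rfl⟩
  exact projDist_nonneg x y

lemma kappa_le_one {i j : ι} (hij : i ≠ j) (hi : E i ≠ ⊥) (hj : E j ≠ ⊥) :
    kappa E ≤ 1 := by
  obtain ⟨x, hx, hx0⟩ := Submodule.exists_mem_ne_zero_of_ne_bot hi
  obtain ⟨y, hy, hy0⟩ := Submodule.exists_mem_ne_zero_of_ne_bot hj
  refine (kappa_le_projDist (I := {i}) (J := {j}) ?_ ?_ hx0 ?_ hy0).trans (projDist_le_one x y)
  · exact Finset.disjoint_singleton.2 hij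
  · exact mem_biSup_of_mem (Finset.mem_singleton_self i) hx
  · exact mem_biSup_of_mem (Finset.mem_singleton_self j) hy

lemma mul_norm_le_norm_add_of_le_kappa {ε : ℝ} (hε1 : ε ≤ 1) (hκ : ε ≤ kappa E)
    {I J : Finset ι} (hIJ : Disjoint I J) {u w : V} (hu : u ∈ ⨆ i ∈ I, E i)
    (hw : w ∈ ⨆ j ∈ J, E j) : ε * ‖u‖ ≤ ‖u + w‖ := by
  rcases eq_or_ne u 0 with rfl | hu0
  · simp
  rcases eq_or_ne w 0 with rfl | hw0
  · simpa using mul_le_of_le_one_left (norm_nonneg u) hε1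
  calc ε * ‖u‖ ≤ projDist u w * ‖u‖ := by
        gcongr
        exact hκ.trans (kappa_le_projDist hIJ hu hu0 hw hw0)
    _ ≤ ‖u + w‖ := by rw [mul_comm]; exact norm_mul_projDist_le_norm_add u w

end Kappa

section Splitting

variable {ι : Type*} [Fintype ι] [DecidableEq ι] {E : ι → Submodule ℝ V} {L : ι → V →ₗ[ℝ] V}

lemma sub_sum_mem_iSup_compl (hsum : ∀ x, ∑ k, L k x = x) (hL : ∀ k x, L k x ∈ E k)
    (I : Finset ι) (z : V) : z - ∑ k ∈ I, L k z ∈ ⨆ k ∈ Iᶜ, E k := by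
  have hz : z - ∑ k ∈ I, L k z = ∑ k ∈ Iᶜ, L k z := by
    rw [sub_eq_iff_eq_add', Finset.sum_add_sum_compl, hsum]
  rw [hz]
  exact Submodule.sum_mem _ fun k hk => mem_biSup_of_mem hk (hL k z)

lemma mul_norm_apply_le_norm (hsum : ∀ x, ∑ k, L k x = x) (hL : ∀ k x, L k x ∈ E k)
    {ε : ℝ} (hε1 : ε ≤ 1) (hκ : ε ≤ kappa E) (j : ι) (z : V) : ε * ‖L j z‖ ≤ ‖z‖ := by
  simpa using mul_norm_le_norm_add_of_le_kappa hε1 hκ disjoint_compl_right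
    (mem_biSup_of_mem (Finset.mem_singleton_self j) (hL j z))
    (sub_sum_mem_iSup_compl hsum hL {j} z)

lemma apply_eq_zero_of_mem (hsum : ∀ x, ∑ k, L k x = x) (hL : ∀ k x, L k x ∈ E k)
    {ε : ℝ} (hε : 0 < ε) (hε1 : ε ≤ 1) (hκ : ε ≤ kappa E) {j k : ι} (hjk : j ≠ k) {z : V}
    (hz : z ∈ E k) : L j z = 0 := by
  have hzc : z ∈ ⨆ i ∈ ({j}ᶜ : Finset ι), E i :=
    mem_biSup_of_mem (by simpa using hjk.symm) hz
  have := mul_norm_le_norm_add_of_le_kappa hε1 hκ disjoint_compl_right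
    (mem_biSup_of_mem (Finset.mem_singleton_self j) (hL j z))
    (sub_mem (sub_sum_mem_iSup_compl hsum hL {j} z) hzc)
  rw [Finset.sum_singleton, show L j z + (z - L j z - z) = 0 by abel, norm_zero] at this
  exact norm_eq_zero.1 (le_antisymm (nonpos_of_mul_nonpos_right this hε) (norm_nonneg _))

end Splitting

section Flag

variable {s : ℕ} {E : Fin (s+1) → Submodule ℝ V} {L : Fin (s+1) → V →ₗ[ℝ] V}

lemma Vlow_eq_iSup_compl (i : ℕ) :
    Vlow E i = ⨆ k ∈ (Finset.univ.filter fun k : Fin (s+1) => (k : ℕ) ≤ i)ᶜ, E k := by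
  simp [Vlow]

lemma sub_sub_apply_sub_mem_Vlow (hsum : ∀ x, ∑ k, L k x = x) (hL : ∀ k x, L k x ∈ E k)
    {i : ℕ} (hi : i < s + 1) {x y : V} (hagree : ∀ k : Fin (s+1), (k : ℕ) < i → L k x = L k y) :
    x - y - (L ⟨i, hi⟩ x - L ⟨i, hi⟩ y) ∈ Vlow E i := by
  have h := sub_sum_mem_iSup_compl hsum hL (Finset.univ.filter fun k : Fin (s+1) => (k : ℕ) ≤ i)
    (x - y)
  have hv : ∑ k ∈ Finset.univ.filter (fun k : Fin (s+1) => (k : ℕ) ≤ i), L k (x - y)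
      = L ⟨i, hi⟩ x - L ⟨i, hi⟩ y := by
    rw [Finset.sum_eq_single_of_mem ⟨i, hi⟩ (by simp), map_sub]
    intro k hk hki
    have hk : (k : ℕ) < i := lt_of_le_of_ne (by simpa using hk) (fun h => hki (Fin.ext h))
    rw [map_sub, hagree k hk, sub_self]
  rwa [hv, ← Vlow_eq_iSup_compl] at h

lemma mul_norm_le_norm_add_of_mem_Vlow {ε : ℝ} (hε1 : ε ≤ 1) (hκ : ε ≤ kappa E) {i : ℕ}
    (hi : i < s + 1) {u w : V} (hu : u ∈ E ⟨i, hi⟩) (hw : w ∈ Vlow E i) :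
    ε * ‖u‖ ≤ ‖u + w‖ := by
  rw [Vlow_eq_iSup_compl] at hw
  refine mul_norm_le_norm_add_of_le_kappa hε1 hκ ?_
    (mem_biSup_of_mem (Finset.mem_singleton_self _) hu) hw
  simp

lemma Vlow_le_ker (hsum : ∀ x, ∑ k, L k x = x) (hL : ∀ k x, L k x ∈ E k) {ε : ℝ} (hε : 0 < ε)
    (hε1 : ε ≤ 1) (hκ : ε ≤ kappa E) {f₀ : V →ₗ[ℝ] ℝ} {u₀ : V} (hf₀ : ∀ x, L 0 x = f₀ x • u₀)
    (hu₀ : u₀ ≠ 0) (i : ℕ) : Vlow E i ≤ LinearMap.ker f₀ := by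
  refine iSup_le fun k => iSup_le fun hik z hz => ?_
  have h0k : (0 : Fin (s+1)) ≠ k := fun h => by simp [← h] at hik
  have := apply_eq_zero_of_mem hsum hL hε hε1 hκ h0k hz
  rw [hf₀, smul_eq_zero] at this
  exact this.resolve_right hu₀

lemma norm_apply_sub_le_of_projDist_le [FiniteDimensional ℝ V]
    (hsum : ∀ x, ∑ k, L k x = x) (hL : ∀ k x, L k x ∈ E k) {ε : ℝ} (hε : 0 < ε)
    (hε1 : ε ≤ 1) (hκ : ε ≤ kappa E) {f₀ : V →ₗ[ℝ] ℝ} {u₀ : V} (hf₀ : ∀ x, L 0 x = f₀ x • u₀)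
    (hu₀ : ‖u₀‖ = 1) {i : ℕ} (hi : i < s + 1) {x y : V} (hfx : f₀ x = 1) (hfy : f₀ y = 1)
    (hagree : ∀ k : Fin (s+1), (k : ℕ) < i → L k x = L k y) {A r : ℝ} (hx : ‖x‖ ≤ A)
    (hr : 2 * ε⁻¹ * A * r ≤ 1)
    (hd : projDist ((Vlow E i)ᗮ.starProjection x) ((Vlow E i)ᗮ.starProjection y) ≤ r) :
    ‖L ⟨i, hi⟩ x - L ⟨i, hi⟩ y‖ ≤ ε⁻¹ * (2 * (1 + ε⁻¹ * A) * A * r) := by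
  set W := Vlow E i
  set P := Wᗮ.starProjection
  set v := L ⟨i, hi⟩ x - L ⟨i, hi⟩ y
  have hPsub : ∀ z, P z - z ∈ W := fun z => by
    simp [P, Submodule.starProjection_orthogonal_val]
  have hWker := Vlow_le_ker hsum hL hε hε1 hκ hf₀ (by simp [← norm_ne_zero_iff, hu₀]) i
  have hfP : ∀ z, f₀ (P z) = f₀ z := fun z => sub_eq_zero.1 (by simpa using hWker (hPsub z))
  have hPv : P v = P x - P y := by
    have := Submodule.starProjection_orthogonal_apply_eq_zero
      (sub_sub_apply_sub_mem_Vlow hsum hL hi hagree)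
    rwa [map_sub, map_sub, sub_eq_zero, eq_comm] at this
  have hφ : ∀ z, |f₀ z| ≤ ε⁻¹ * ‖z‖ := fun z => by
    have := mul_norm_apply_le_norm hsum hL hε1 hκ 0 z
    rwa [hf₀, norm_smul, hu₀, mul_one, Real.norm_eq_abs, ← le_inv_mul_iff₀ hε] at this
  calc ‖v‖ ≤ ε⁻¹ * ‖P v‖ := by
        have := mul_norm_le_norm_add_of_mem_Vlow hε1 hκ hi (sub_mem (hL _ x) (hL _ y)) (hPsub v)
        rwa [add_sub_cancel, ← le_inv_mul_iff₀ hε] at this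
    _ = ε⁻¹ * ‖P x - P y‖ := by rw [hPv]
    _ ≤ ε⁻¹ * (2 * (1 + ε⁻¹ * A) * A * r) := by
        gcongr
        exact norm_sub_le_of_projDist_le f₀ hφ (by rw [hfP, hfx]) (by rw [hfP, hfy])
          ((Wᗮ.norm_starProjection_apply_le x).trans hx) hr hd

lemma norm_le_finrank_mul [FiniteDimensional ℝ V] (hE : DirectSum.IsInternal E)
    (hE0 : ∀ k, E k ≠ ⊥) (hsum : ∀ x, ∑ k, L k x = x) {x : V} {c : ℝ} (hc : ∀ k, ‖L k x‖ ≤ c) :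
    ‖x‖ ≤ Module.finrank ℝ V * c := by
  have hcard : s + 1 ≤ Module.finrank ℝ V := by
    simpa [hE0] using hE.submodule_iSupIndep.subtype_ne_bot_le_finrank
  calc ‖x‖ = ‖∑ k, L k x‖ := by rw [hsum]
    _ ≤ ∑ k, ‖L k x‖ := norm_sum_le _ _
    _ ≤ ∑ _k : Fin (s+1), c := Finset.sum_le_sum fun k _ => hc k
    _ = (s + 1) * c := by simp
    _ ≤ Module.finrank ℝ V * c := by
        gcongr
        · exact (norm_nonneg _).trans (hc 0)
        · exact_mod_cast hcard

end Flag

/-- Lemma 5.5 of the paper. For every `ε > 0` there is `M > 1` such that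
for every splitting `V = E₀ ⊕ ⋯ ⊕ E_s` (with `dim E₀ = 1` and `κ ≥ ε`), every `1 ≤ i ≤ s`,
and all `x̄, ȳ ∈ P(V) ∖ P(V⁰)` with `‖g(x̄)‖_∞ ≤ ε⁻¹`, agreeing in `g⁰,…,g^{i−1}`, and with
`d(P_{(Vⁱ)^⊥}x̄, P_{(Vⁱ)^⊥}ȳ) ≤ r < M⁻¹`: `|gⁱ(x̄) − gⁱ(ȳ)| ≤ M r`. -/
theorem stmt12 [FiniteDimensional ℝ V] :
    ∀ ε > (0 : ℝ), ∃ M : ℝ, 1 < M ∧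
      ∀ (s : ℕ), 1 ≤ s → ∀ (E : Fin (s+1) → Submodule ℝ V),
        DirectSum.IsInternal E → (∀ k, E k ≠ ⊥) → Module.finrank ℝ (E 0) = 1 →
        ε ≤ kappa E →
        ∀ (L : Fin (s+1) → V →ₗ[ℝ] V), (∀ x : V, ∑ k, L k x = x) → (∀ k x, L k x ∈ E k) →
        ∀ u₀ : V, u₀ ∈ E 0 → ‖u₀‖ = 1 →
        ∀ f₀ : V →ₗ[ℝ] ℝ, (∀ x, L 0 x = f₀ x • u₀) →
        ∀ (i : ℕ) (hi1 : 1 ≤ i) (hi2 : i ≤ s),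
        ∀ x y : V, x ≠ 0 → y ≠ 0 → f₀ x ≠ 0 → f₀ y ≠ 0 →
        (Finset.univ.sup' Finset.univ_nonempty fun k => ‖(f₀ x)⁻¹ • L k x‖) ≤ ε⁻¹ →
        (∀ k : Fin (s+1), (k : ℕ) < i → (f₀ x)⁻¹ • L k x = (f₀ y)⁻¹ • L k y) →
        ∀ r : ℝ, 0 < r → r < M⁻¹ →
        projDist (Submodule.orthogonalProjectionOnto (Vlow E i)ᗮ x : V)
            (Submodule.orthogonalProjectionOnto (Vlow E i)ᗮ y : V) ≤ r →
        ‖(f₀ x)⁻¹ • L ⟨i, by omega⟩ x - (f₀ y)⁻¹ • L ⟨i, by omega⟩ y‖ ≤ M * r := by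
  intro ε hε
  set A : ℝ := Module.finrank ℝ V * ε⁻¹
  set K : ℝ := 2 * ε⁻¹ * A * (1 + ε⁻¹ * A)
  have hK : 2 * ε⁻¹ * A ≤ K :=
    le_mul_of_one_le_right (by positivity) (le_add_of_nonneg_right (by positivity))
  have hK2 : 0 < K + 2 := by positivity
  refine ⟨K + 2, by linarith [(by positivity : 0 ≤ K)], ?_⟩
  intro s hs E hE hE0 _ hκ L hsum hL u₀ _ hu₀ f₀ hf₀ i _ hi x y _ _ hfx hfy hsup hagree r hr hrM hd
  have hε1 : ε ≤ 1 := hκ.trans (kappa_le_one (i := 0) (j := ⟨1, by omega⟩)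
    (by simp [Fin.ext_iff]) (hE0 _) (hE0 _))
  have hKr : (K + 2) * r < 1 := (lt_inv_mul_iff₀ hK2).1 (by rwa [mul_one])
  have key := norm_apply_sub_le_of_projDist_le hsum hL hε hε1 hκ hf₀ hu₀ (Nat.lt_succ_of_le hi)
    (x := (f₀ x)⁻¹ • x) (y := (f₀ y)⁻¹ • y) (A := A) (r := r) (by simp [hfx]) (by simp [hfy])
    (fun k hk => by simpa only [map_smul] using hagree k hk)
    (norm_le_finrank_mul hE hE0 hsum fun k => by
      simpa only [map_smul] using (Finset.le_sup' _ (Finset.mem_univ k)).trans hsup)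
    (by nlinarith) (by rwa [map_smul, map_smul, projDist_smul (inv_ne_zero hfx) (inv_ne_zero hfy)])
  simp only [map_smul] at key
  calc _ ≤ K * r := key.trans_eq (by ring)
    _ ≤ (K + 2) * r := by linarith
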